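/- arXiv:0904.2271 — 2 statements merged into one kernel-verified Lean document; each statement's English description precedes it below -/
import Mathlib

section
/- Let m ≥ 2 be an integer and G : [2,∞) → (0,∞) a function with G(X) → ∞, and suppose: (i) for every large X in a sequence x_n → ∞ we have |Δ(x_n)| ≥ B₃·G(x_n); (ii) |Δ(X) − Δ(x)| ≤ B₁·(x−X)·log X + X^ε for X ≤ x ≤ X+H; (iii) Δ(x) ≪ x^{1/3}. Then with H = B₂·G(X)/log X for sufficiently small B₂ > 0, the function Δ does not change sign on [x_n, x_n + H] and (1/H)∫_{x_n}^{x_n+H} |Δ(x)| dx ≥ (B₃/2)·G(x_n) for large n. -/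
/-!
By (i), `|Δ(x_n)| ≥ B₃ G(x_n)`. On `[x_n, x_n + H]` with `H = B₂ G(x_n) / log x_n`, the
variation bound (ii) moves `Δ` by at most `B₁ H log x_n + x_n^ε = B₁ B₂ G(x_n) + x_n^ε`, which is
at most `(B₃/2) G(x_n)` once `B₂ ≤ B₃ / (4 B₁)` and `G` beats `X^ε log X`. So `Δ` stays on the side
of `Δ(x_n)` with `|Δ| ≥ (B₃/2) G(x_n)`, and the mean of `|Δ|` inherits this bound. The bound (iii),
combined with (i), gives `G(x_n) ≪ x_n^{1/3}`, so `H ≤ x_n` and (ii) applies on the whole interval.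
-/

open MeasureTheory intervalIntegral Filter Set

lemma mul_nonneg_of_abs_sub_le_half_abs {a b c : ℝ} (hb : |a - b| ≤ |a| / 2)
    (hc : |a - c| ≤ |a| / 2) : 0 ≤ b * c := by
  rw [abs_le] at hb hc
  rcases le_total 0 a with ha | ha
  · rw [abs_of_nonneg ha] at hb hc
    exact mul_nonneg (by linarith) (by linarith)
  · rw [abs_of_nonpos ha] at hb hc
    exact mul_nonneg_of_nonpos_of_nonpos (by linarith) (by linarith)

lemma le_inv_sub_mul_integral_of_le_on {f : ℝ → ℝ} {a b A : ℝ} (hab : a < b)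
    (hf : IntervalIntegrable f volume a b) (h : ∀ t ∈ Icc a b, A ≤ f t) :
    A ≤ (b - a)⁻¹ * ∫ t in a..b, f t := by
  have hmono := integral_mono_on hab.le intervalIntegrable_const hf h
  rw [intervalIntegral.integral_const, smul_eq_mul] at hmono
  rwa [le_inv_mul_iff₀ (sub_pos.mpr hab)]

lemma sign_const_and_le_mean_abs_of_abs_sub_le {f : ℝ → ℝ} {X H A : ℝ} (hH : 0 < H)
    (hf : IntervalIntegrable f volume X (X + H)) (hfX : 2 * A ≤ |f X|)
    (hvar : ∀ y ∈ Icc X (X + H), |f X - f y| ≤ A) :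
    (∀ y ∈ Icc X (X + H), ∀ z ∈ Icc X (X + H), 0 ≤ f y * f z) ∧
      A ≤ H⁻¹ * ∫ t in X..(X + H), |f t| := by
  have hvar' : ∀ y ∈ Icc X (X + H), |f X - f y| ≤ |f X| / 2 := fun y hy => by
    linarith [hvar y hy]
  refine ⟨fun y hy z hz => mul_nonneg_of_abs_sub_le_half_abs (hvar' y hy) (hvar' z hz), ?_⟩
  have hlow : ∀ y ∈ Icc X (X + H), A ≤ |f y| := fun y hy => by
    linarith [hvar y hy, abs_sub_abs_le_abs_sub (f X) (f y)]
  simpa using le_inv_sub_mul_integral_of_le_on (by linarith) hf.abs hlow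

lemma eventually_le_const_mul_of_tendsto_div_atTop {α : Type*} {l : Filter α} {f g : α → ℝ}
    (h : Tendsto (fun X => f X / g X) l atTop) (hg : ∀ᶠ X in l, 0 < g X) {δ : ℝ} (hδ : 0 < δ) :
    ∀ᶠ X in l, g X ≤ δ * f X := by
  filter_upwards [h.eventually_ge_atTop δ⁻¹, hg] with X hX hgX
  rw [le_div_iff₀ hgX] at hX
  calc g X = δ * (δ⁻¹ * g X) := by field_simp
    _ ≤ δ * f X := by gcongr

lemma eventually_const_mul_rpow_le_self {p : ℝ} (hp : p < 1) (K : ℝ) :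
    ∀ᶠ X in (atTop : Filter ℝ), K * X ^ p ≤ X := by
  filter_upwards [(tendsto_rpow_atTop (sub_pos.mpr hp)).eventually_ge_atTop K,
    eventually_gt_atTop 0] with X hK hX
  calc K * X ^ p ≤ X ^ (1 - p) * X ^ p := by gcongr
    _ = X := by rw [← Real.rpow_add hX, sub_add_cancel, Real.rpow_one]

theorem omega_interval_step_general (Δ G : ℝ → ℝ) (x : ℕ → ℝ)
    (hGpos : ∀ X : ℝ, 2 ≤ X → 0 < G X)
    (hx : Tendsto x atTop atTop)
    (ε B₁ B₃ : ℝ) (hB₁ : 0 < B₁) (hB₃ : 0 < B₃)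
    -- (i) the omega-result along the sequence
    (hi : ∀ᶠ n in atTop, B₃ * G (x n) ≤ |Δ (x n)|)
    -- (ii) the local variation bound
    (hii : ∀ᶠ X in (atTop : Filter ℝ), ∀ y : ℝ, X ≤ y → y ≤ 2 * X →
      |Δ X - Δ y| ≤ B₁ * (y - X) * Real.log X + X ^ ε)
    -- (iii) the pointwise bound Δ(x) ≪ x^{1/3}
    (hiii : ∃ c : ℝ, 0 < c ∧ ∀ X : ℝ, 2 ≤ X → |Δ X| ≤ c * X ^ ((1 : ℝ) / 3))
    -- G grows faster than X^ε·log X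
    (hGε : Tendsto (fun X : ℝ => G X / (X ^ ε * Real.log X)) atTop atTop)
    (hint : ∀ a b : ℝ, IntervalIntegrable Δ volume a b) :
    ∃ B₂₀ : ℝ, 0 < B₂₀ ∧ ∀ B₂ : ℝ, 0 < B₂ → B₂ ≤ B₂₀ →
      ∀ᶠ n in atTop,
        (∀ y ∈ Set.Icc (x n) (x n + B₂ * G (x n) / Real.log (x n)),
          ∀ z ∈ Set.Icc (x n) (x n + B₂ * G (x n) / Real.log (x n)), 0 ≤ Δ y * Δ z) ∧
        (B₃ / 2) * G (x n) ≤
          (Real.log (x n) / (B₂ * G (x n))) *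
            ∫ t in (x n)..(x n + B₂ * G (x n) / Real.log (x n)), |Δ t| := by
  obtain ⟨c, -, hΔc⟩ := hiii
  refine ⟨B₃ / (4 * B₁), by positivity, fun B₂ hB₂ hB₂le => ?_⟩
  have hB₁B₂ : B₁ * B₂ ≤ B₃ / 4 := by
    rw [le_div_iff₀ (by positivity)] at hB₂le; linarith
  have hdenom : ∀ᶠ X in (atTop : Filter ℝ), 0 < X ^ ε * Real.log X := by
    filter_upwards [eventually_gt_atTop 1] with X hX
    have := Real.log_pos hX
    positivity
  filter_upwards [hi, hx.eventually hii, hx.eventually (eventually_ge_atTop (Real.exp 1)),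
    hx.eventually
      (eventually_le_const_mul_of_tendsto_div_atTop (δ := B₃ / 4) hGε hdenom (by positivity)),
    hx.eventually (eventually_const_mul_rpow_le_self (p := 1 / 3) (by norm_num) (B₂ * c / B₃))]
    with n hΔX hvar hXe hεG hKX
  set X := x n
  set L := Real.log X
  set H := B₂ * G X / L
  have hX2 : 2 ≤ X := le_trans (by linarith [Real.add_one_le_exp (1 : ℝ)]) hXe
  have hL1 : 1 ≤ L := (Real.le_log_iff_exp_le (by linarith)).mpr hXe
  have hGX : 0 < G X := hGpos X hX2
  have hH : 0 < H := by positivity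
  have hHX : H ≤ X := calc
    H ≤ B₂ * G X := div_le_self (by positivity) hL1
    _ = B₂ / B₃ * (B₃ * G X) := by field_simp
    _ ≤ B₂ / B₃ * (c * X ^ ((1 : ℝ) / 3)) :=
      mul_le_mul_of_nonneg_left (hΔX.trans (hΔc X hX2)) (by positivity)
    _ = B₂ * c / B₃ * X ^ ((1 : ℝ) / 3) := by ring
    _ ≤ X := hKX
  have hvarH : ∀ y ∈ Icc X (X + H), |Δ X - Δ y| ≤ B₃ / 2 * G X := fun y ⟨hXy, hyH⟩ => calc
    |Δ X - Δ y| ≤ B₁ * (y - X) * L + X ^ ε := hvar y hXy (by linarith)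
    _ ≤ B₁ * H * L + X ^ ε * L := by
      gcongr
      · linarith
      · exact le_mul_of_one_le_right (by positivity) hL1
    _ = B₁ * B₂ * G X + X ^ ε * L := by
      simp only [H]; field_simp
    _ ≤ B₃ / 2 * G X := by linarith [mul_le_mul_of_nonneg_right hB₁B₂ hGX.le]
  have hmean := sign_const_and_le_mean_abs_of_abs_sub_le hH (hint _ _) (by linarith) hvarH
  rwa [show H⁻¹ = L / (B₂ * G X) from inv_div _ _] at hmean

/-- The key step in the proof of Theorem 1: along Soundararajan's omega-sequence `x n`,
with `H = B₂·G(x n)/log(x n)` for sufficiently small `B₂ > 0`, the error term `Δ` keeps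
a fixed sign on `[x n, x n + H]` and `(1/H)∫ |Δ| ≥ (B₃/2)·G(x n)` for large `n`. -/
theorem omega_interval_step (m : ℕ) (hm : 2 ≤ m) (Δ G : ℝ → ℝ) (x : ℕ → ℝ)
    (hGpos : ∀ X : ℝ, 2 ≤ X → 0 < G X)
    (hx : Tendsto x atTop atTop)
    (ε B₁ B₃ : ℝ) (hε : 0 < ε) (hB₁ : 0 < B₁) (hB₃ : 0 < B₃)
    -- (i) the omega-result along the sequence
    (hi : ∀ᶠ n in atTop, B₃ * G (x n) ≤ |Δ (x n)|)
    -- (ii) the local variation bound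
    (hii : ∀ᶠ X in (atTop : Filter ℝ), ∀ y : ℝ, X ≤ y → y ≤ 2 * X →
      |Δ X - Δ y| ≤ B₁ * (y - X) * Real.log X + X ^ ε)
    -- (iii) the pointwise bound Δ(x) ≪ x^{1/3}
    (hiii : ∃ c : ℝ, 0 < c ∧ ∀ X : ℝ, 2 ≤ X → |Δ X| ≤ c * X ^ ((1 : ℝ) / 3))
    -- G grows faster than X^ε·log X
    (hGε : Tendsto (fun X : ℝ => G X / (X ^ ε * Real.log X)) atTop atTop)
    (hint : ∀ a b : ℝ, IntervalIntegrable Δ volume a b) :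
    ∃ B₂₀ : ℝ, 0 < B₂₀ ∧ ∀ B₂ : ℝ, 0 < B₂ → B₂ ≤ B₂₀ →
      ∀ᶠ n in atTop,
        (∀ y ∈ Set.Icc (x n) (x n + B₂ * G (x n) / Real.log (x n)),
          ∀ z ∈ Set.Icc (x n) (x n + B₂ * G (x n) / Real.log (x n)), 0 ≤ Δ y * Δ z) ∧
        (B₃ / 2) * G (x n) ≤
          (Real.log (x n) / (B₂ * G (x n))) *
            ∫ t in (x n)..(x n + B₂ * G (x n) / Real.log (x n)), |Δ t| :=
  omega_interval_step_general Δ G x hGpos hx ε B₁ B₃ hB₁ hB₃ hi hii hiii hGε hint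
end

section
/- Let k ≥ 2 and K ≥ 1, and suppose that for all quadruples (m, n, j, ℓ) with K < m, n, j, ℓ ≤ 2K counted with the Robert–Sargos bound: the number of quadruples with |m^{1/k} + n^{1/k} − j^{1/k} − ℓ^{1/k}| < δ·K^{1/k} is ≪_ε K^ε(K^4·δ + K^2). Then, with δ = X^{1−1/k}·H^{−1}·K^{−1/k} and using d_k(n) ≪_ε n^ε, the sum Σ d_k(m)d_k(n)d_k(j)d_k(ℓ)·(mnjℓ)^{−(k+1)/(2k)} over quadruples in (K, 2K]^4 with |m^{1/k}+n^{1/k}−j^{1/k}−ℓ^{1/k}| ≤ X^{1−1/k+ε}·H^{−1}/(2kπ), multiplied by H, is ≪_ε X^ε·H + X^{1−1/k+ε}·K^{2−3/k}·X^ε. -/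
open Real

/-- `dk k n` is the number of ordered factorizations of `n` into `k` positive factors. -/
def dk (k n : ℕ) : ℕ := Fintype.card {f : Fin k → Fin (n + 1) // (∏ i, ((f i : ℕ))) = n}

/-!
Enlarging the window `|m^{1/k}+n^{1/k}-j^{1/k}-ℓ^{1/k}| ≤ T` to `< δ K^{1/k}` with
`δ = 2T / K^{1/k}` lets the Robert–Sargos bound count the quadruples, and on the box each summand
is at most `(c K^ε)^4 K^{-2-2/k}` by the divisor bound. In the product the `K^4 δ` term becomes
`T K^{2-3/k}`, where `H T ≤ X^{1-1/k+ε}`, the `K^2` term is at most `1`, and the five factors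
`K^{ε/5}` are absorbed into `X^ε`.
-/

open Finset

noncomputable section

def quadBox (K : ℕ) : Finset ((ℕ × ℕ) × (ℕ × ℕ)) :=
  (Ioc K (2 * K) ×ˢ Ioc K (2 * K)) ×ˢ (Ioc K (2 * K) ×ˢ Ioc K (2 * K))

def rootDefect (k : ℕ) (p : (ℕ × ℕ) × (ℕ × ℕ)) : ℝ :=
  (p.1.1 : ℝ) ^ ((1 : ℝ) / k) + (p.1.2 : ℝ) ^ ((1 : ℝ) / k) -
    (p.2.1 : ℝ) ^ ((1 : ℝ) / k) - (p.2.2 : ℝ) ^ ((1 : ℝ) / k)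

def quadSummand (k : ℕ) (p : (ℕ × ℕ) × (ℕ × ℕ)) : ℝ :=
  (dk k p.1.1 : ℝ) * (dk k p.1.2 : ℝ) * (dk k p.2.1 : ℝ) * (dk k p.2.2 : ℝ) *
    ((p.1.1 * p.1.2 * p.2.1 * p.2.2 : ℕ) : ℝ) ^ (-(((k : ℝ) + 1) / (2 * k)))

end

lemma le_mul_rpow_of_mem_Ioc {f : ℕ → ℝ} {c ε : ℝ} (hc : 0 ≤ c) (hε : 0 ≤ ε)
    (hf : ∀ n : ℕ, 1 ≤ n → f n ≤ c * (n : ℝ) ^ ε) {K a : ℕ} (ha : a ∈ Ioc K (2 * K)) :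
    f a ≤ c * 2 ^ ε * (K : ℝ) ^ ε := by
  obtain ⟨hKa, ha2K⟩ := mem_Ioc.mp ha
  have ha2K' : (a : ℝ) ≤ 2 * K := by exact_mod_cast ha2K
  calc f a ≤ c * (a : ℝ) ^ ε := hf a (by omega)
    _ ≤ c * (2 * K : ℝ) ^ ε := by gcongr
    _ = c * 2 ^ ε * (K : ℝ) ^ ε := by rw [mul_rpow (by norm_num) K.cast_nonneg, mul_assoc]

lemma rpow_neg_le_rpow_neg_of_pow_le {K x s : ℝ} (hK : 0 < K) (hx : K ^ 4 ≤ x) (hs : 0 ≤ s) :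
    x ^ (-s) ≤ K ^ (-(4 * s)) := by
  calc x ^ (-s) ≤ (K ^ 4) ^ (-s) := rpow_le_rpow_of_nonpos (by positivity) hx (by linarith)
    _ = K ^ (-(4 * s)) := by
      rw [← rpow_natCast, ← rpow_mul hK.le]
      norm_num

lemma quadSummand_le {k K : ℕ} (hk : 0 < k) {c ε : ℝ} (hc : 0 ≤ c) (hε : 0 ≤ ε)
    (hd : ∀ n : ℕ, 1 ≤ n → (dk k n : ℝ) ≤ c * (n : ℝ) ^ ε) {p : (ℕ × ℕ) × (ℕ × ℕ)}
    (hp : p ∈ quadBox K) :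
    quadSummand k p ≤ (c * 2 ^ ε * (K : ℝ) ^ ε) ^ 4 * (K : ℝ) ^ (-(2 + 2 / (k : ℝ))) := by
  obtain ⟨⟨hm, hn⟩, hj, hl⟩ := by simpa only [quadBox, mem_product] using hp
  have hK : (0 : ℝ) < K := by
    have := mem_Ioc.mp hm
    exact_mod_cast (show 0 < K by omega)
  have hbox : ∀ a ∈ Ioc K (2 * K), K ≤ a := fun a ha => (mem_Ioc.mp ha).1.le
  have hdiv := fun a (ha : a ∈ Ioc K (2 * K)) => le_mul_rpow_of_mem_Ioc hc hε hd ha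
  have hweight : ((p.1.1 * p.1.2 * p.2.1 * p.2.2 : ℕ) : ℝ) ^ (-(((k : ℝ) + 1) / (2 * k))) ≤
      (K : ℝ) ^ (-(2 + 2 / (k : ℝ))) := by
    have hprod : (K : ℝ) ^ 4 ≤ ((p.1.1 * p.1.2 * p.2.1 * p.2.2 : ℕ) : ℝ) := by
      push_cast
      calc (K : ℝ) ^ 4 = K * K * K * K := by ring
        _ ≤ _ := by gcongr <;> exact hbox _ ‹_›
    have hexp : 4 * (((k : ℝ) + 1) / (2 * k)) = 2 + 2 / (k : ℝ) := by field_simp; ring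
    simpa only [hexp] using
      rpow_neg_le_rpow_neg_of_pow_le (s := ((k : ℝ) + 1) / (2 * k)) hK hprod (by positivity)
  set D := c * 2 ^ ε * (K : ℝ) ^ ε
  have hdivs : (dk k p.1.1 : ℝ) * dk k p.1.2 * dk k p.2.1 * dk k p.2.2 ≤ D * D * D * D := by
    gcongr ?_ * ?_ * ?_ * ?_ <;> exact hdiv _ ‹_›
  calc quadSummand k p ≤ (D * D * D * D) * (K : ℝ) ^ (-(2 + 2 / (k : ℝ))) :=
        mul_le_mul hdivs hweight (by positivity) (by positivity)
    _ = D ^ 4 * (K : ℝ) ^ (-(2 + 2 / (k : ℝ))) := by ring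

lemma card_filter_abs_rootDefect_le {k K : ℕ} {c ε T : ℝ} (hK : 0 < K) (hT : 0 < T)
    (hcount : ∀ δ : ℝ, 0 < δ →
      (((quadBox K).filter fun p => |rootDefect k p| < δ * (K : ℝ) ^ ((1 : ℝ) / k)).card : ℝ)
        ≤ c * (K : ℝ) ^ ε * ((K : ℝ) ^ 4 * δ + (K : ℝ) ^ 2)) :
    (((quadBox K).filter fun p => |rootDefect k p| ≤ T).card : ℝ) ≤
      c * (K : ℝ) ^ ε * (2 * T * (K : ℝ) ^ (4 - 1 / (k : ℝ)) + (K : ℝ) ^ 2) := by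
  have hK' : (0 : ℝ) < K := by exact_mod_cast hK
  have hKk : (0 : ℝ) < (K : ℝ) ^ ((1 : ℝ) / k) := by positivity
  set δ := 2 * T / (K : ℝ) ^ ((1 : ℝ) / k)
  have hδ : δ * (K : ℝ) ^ ((1 : ℝ) / k) = 2 * T := div_mul_cancel₀ _ hKk.ne'
  have hKδ : (K : ℝ) ^ 4 * δ = 2 * T * (K : ℝ) ^ (4 - 1 / (k : ℝ)) := by
    rw [rpow_sub hK', rpow_ofNat]
    ring
  calc (((quadBox K).filter fun p => |rootDefect k p| ≤ T).card : ℝ)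
      ≤ ((quadBox K).filter fun p => |rootDefect k p| < δ * (K : ℝ) ^ ((1 : ℝ) / k)).card := by
        gcongr with p _ hp
        linarith
    _ ≤ _ := hcount δ (by positivity)
    _ = _ := by rw [hKδ]

lemma sum_quadSummand_filter_le {k K : ℕ} (hk : 0 < k) (hK : 0 < K) {c₁ c₂ ε T : ℝ}
    (hc₁ : 0 ≤ c₁) (hc₂ : 0 ≤ c₂) (hε : 0 ≤ ε) (hT : 0 < T)
    (hcount : ∀ δ : ℝ, 0 < δ →
      (((quadBox K).filter fun p => |rootDefect k p| < δ * (K : ℝ) ^ ((1 : ℝ) / k)).card : ℝ)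
        ≤ c₁ * (K : ℝ) ^ ε * ((K : ℝ) ^ 4 * δ + (K : ℝ) ^ 2))
    (hd : ∀ n : ℕ, 1 ≤ n → (dk k n : ℝ) ≤ c₂ * (n : ℝ) ^ ε) :
    ∑ p ∈ (quadBox K).filter (fun p => |rootDefect k p| ≤ T), quadSummand k p ≤
      c₁ * (c₂ * 2 ^ ε) ^ 4 * (K : ℝ) ^ (5 * ε) * (2 * T * (K : ℝ) ^ (2 - 3 / (k : ℝ)) + 1) := by
  have hK' : (0 : ℝ) < K := by exact_mod_cast hK
  have hKpow : (K : ℝ) ^ ε * ((K : ℝ) ^ ε) ^ 4 = (K : ℝ) ^ (5 * ε) := by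
    rw [← rpow_mul_natCast hK'.le, ← rpow_add hK']
    ring_nf
  have hKexp : (K : ℝ) ^ (4 - 1 / (k : ℝ)) * (K : ℝ) ^ (-(2 + 2 / (k : ℝ))) =
      (K : ℝ) ^ (2 - 3 / (k : ℝ)) := by
    rw [← rpow_add hK']
    ring_nf
  have hKsq : (K : ℝ) ^ 2 * (K : ℝ) ^ (-(2 + 2 / (k : ℝ))) ≤ 1 := by
    rw [← rpow_natCast, ← rpow_add hK']
    refine rpow_le_one_of_one_le_of_nonpos (by exact_mod_cast hK) ?_
    have : (0 : ℝ) ≤ 2 / k := by positivity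
    push_cast
    linarith
  set S := (quadBox K).filter (fun p => |rootDefect k p| ≤ T)
  calc ∑ p ∈ S, quadSummand k p
      ≤ S.card * ((c₂ * 2 ^ ε * (K : ℝ) ^ ε) ^ 4 * (K : ℝ) ^ (-(2 + 2 / (k : ℝ)))) := by
        rw [← nsmul_eq_mul]
        exact sum_le_card_nsmul _ _ _ fun p hp => quadSummand_le hk hc₂ hε hd (mem_filter.mp hp).1
    _ ≤ c₁ * (K : ℝ) ^ ε * (2 * T * (K : ℝ) ^ (4 - 1 / (k : ℝ)) + (K : ℝ) ^ 2) *
          ((c₂ * 2 ^ ε * (K : ℝ) ^ ε) ^ 4 * (K : ℝ) ^ (-(2 + 2 / (k : ℝ)))) := by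
        gcongr
        exact card_filter_abs_rootDefect_le hK hT hcount
    _ = c₁ * (c₂ * 2 ^ ε) ^ 4 * ((K : ℝ) ^ ε * ((K : ℝ) ^ ε) ^ 4) *
          (2 * T * ((K : ℝ) ^ (4 - 1 / (k : ℝ)) * (K : ℝ) ^ (-(2 + 2 / (k : ℝ)))) +
            (K : ℝ) ^ 2 * (K : ℝ) ^ (-(2 + 2 / (k : ℝ)))) := by ring
    _ ≤ _ := by
        rw [hKpow, hKexp]
        gcongr

/-- The central counting estimate in the proof of Theorem 2: assuming the Robert–Sargos
bound and `d_k(n) ≪_ε n^ε`, the weighted sum over quadruples in `(K, 2K]^4` with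
`|m^{1/k}+n^{1/k}−j^{1/k}−ℓ^{1/k}| ≤ X^{1−1/k+ε}·H^{−1}/(2kπ)`, times `H`, is
`≪_ε X^ε·H + X^{1−1/k+ε}·K^{2−3/k}·X^ε`. -/
theorem quadruple_sum_bound (k : ℕ) (hk : 2 ≤ k)
    (hcount : ∀ ε : ℝ, 0 < ε → ∃ c : ℝ, 0 < c ∧ ∀ K : ℕ, 1 ≤ K → ∀ δ : ℝ, 0 < δ →
      (((((Finset.Ioc K (2 * K)) ×ˢ (Finset.Ioc K (2 * K))) ×ˢ
          ((Finset.Ioc K (2 * K)) ×ˢ (Finset.Ioc K (2 * K)))).filter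
        (fun p : (ℕ × ℕ) × (ℕ × ℕ) =>
          |(p.1.1 : ℝ) ^ ((1 : ℝ) / k) + (p.1.2 : ℝ) ^ ((1 : ℝ) / k) -
            (p.2.1 : ℝ) ^ ((1 : ℝ) / k) - (p.2.2 : ℝ) ^ ((1 : ℝ) / k)| <
              δ * (K : ℝ) ^ ((1 : ℝ) / k))).card : ℝ) ≤
        c * (K : ℝ) ^ ε * ((K : ℝ) ^ 4 * δ + (K : ℝ) ^ 2))
    (hd : ∀ ε : ℝ, 0 < ε → ∃ c : ℝ, 0 < c ∧ ∀ n : ℕ, 1 ≤ n → (dk k n : ℝ) ≤ c * (n : ℝ) ^ ε) :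
    ∀ ε : ℝ, 0 < ε → ∃ C : ℝ, 0 < C ∧ ∀ (X H : ℝ) (K : ℕ),
      2 ≤ X → 1 ≤ H → H ≤ X / 2 → 1 ≤ K → (K : ℝ) ≤ X →
      H * ∑ p ∈ ((((Finset.Ioc K (2 * K)) ×ˢ (Finset.Ioc K (2 * K))) ×ˢ
            ((Finset.Ioc K (2 * K)) ×ˢ (Finset.Ioc K (2 * K)))).filter
          (fun p : (ℕ × ℕ) × (ℕ × ℕ) =>
            |(p.1.1 : ℝ) ^ ((1 : ℝ) / k) + (p.1.2 : ℝ) ^ ((1 : ℝ) / k) -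
              (p.2.1 : ℝ) ^ ((1 : ℝ) / k) - (p.2.2 : ℝ) ^ ((1 : ℝ) / k)| ≤
                X ^ (1 - 1 / (k : ℝ) + ε) / H / (2 * k * π))),
          (dk k p.1.1 : ℝ) * (dk k p.1.2 : ℝ) * (dk k p.2.1 : ℝ) * (dk k p.2.2 : ℝ) *
            ((p.1.1 * p.1.2 * p.2.1 * p.2.2 : ℕ) : ℝ) ^ (-(((k : ℝ) + 1) / (2 * k))) ≤
        C * (X ^ ε * H + X ^ (1 - 1 / (k : ℝ) + ε) * (K : ℝ) ^ (2 - 3 / (k : ℝ)) * X ^ ε) := by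
  intro ε hε
  obtain ⟨c₁, hc₁, hcount⟩ := hcount (ε / 5) (by positivity)
  obtain ⟨c₂, hc₂, hd⟩ := hd (ε / 5) (by positivity)
  refine ⟨2 * (c₁ * (c₂ * 2 ^ (ε / 5)) ^ 4), by positivity, fun X H K hX hH _ hK hKX => ?_⟩
  have h2kπ : 1 ≤ 2 * (k : ℝ) * π := by
    have : (2 : ℝ) ≤ k := by exact_mod_cast hk
    nlinarith [pi_gt_three]
  set B := X ^ (1 - 1 / (k : ℝ) + ε)
  set T := B / H / (2 * k * π)
  have hHT : H * T ≤ B := by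
    rw [show H * T = B / (2 * k * π) by simp only [T]; field_simp]
    exact div_le_self (by positivity) h2kπ
  have hsum := sum_quadSummand_filter_le (T := T) (by omega) hK hc₁.le hc₂.le (by positivity)
    (by positivity) (hcount K hK) hd
  rw [show 5 * (ε / 5) = ε by ring] at hsum
  set A := c₁ * (c₂ * 2 ^ (ε / 5)) ^ 4
  have hKX : (K : ℝ) ^ ε ≤ X ^ ε := rpow_le_rpow (by positivity) hKX hε.le
  calc H * ∑ p ∈ (quadBox K).filter (fun p => |rootDefect k p| ≤ T), quadSummand k p
      ≤ H * (A * (K : ℝ) ^ ε * (2 * T * (K : ℝ) ^ (2 - 3 / (k : ℝ)) + 1)) := by gcongr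
    _ = A * (K : ℝ) ^ ε * (2 * (H * T) * (K : ℝ) ^ (2 - 3 / (k : ℝ)) + H) := by ring
    _ ≤ A * X ^ ε * (2 * B * (K : ℝ) ^ (2 - 3 / (k : ℝ)) + H) := by gcongr
    _ ≤ 2 * A * (X ^ ε * H + B * (K : ℝ) ^ (2 - 3 / (k : ℝ)) * X ^ ε) := by
        nlinarith [show 0 ≤ A * X ^ ε * H by positivity]
end
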